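/- arXiv:1203.2895 — 5 statements merged into one kernel-verified Lean document; each statement's English description precedes it below -/
import Mathlib

section
/- Let V : [0,T] × ℝ^d → ℝ^d be a Borel vector field. Then the set of absolutely continuous curves γ : [0,T] → ℝ^d satisfying γ'(t) = V(t, γ(t)) for almost every t is a Borel subset of the space C([0,T], ℝ^d) with the uniform norm. -/
open MeasureTheory Set
open scoped ENNReal NNReal Topology

noncomputable section

/-- For a Borel vector field `V` on `[0,T] × ℝ^d` (with
`∫₀ᵀ ‖V_t‖_∞ dt < ∞`), the set of solutions of the ODE `γ' = V(t,γ)`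
(i.e. curves satisfying the integral equation) is a Borel subset of
`C([0,T], ℝ^d)` with the uniform metric. -/
theorem stmt0 (d : ℕ) (T : ℝ) (hT : 0 ≤ T)
    (V : ℝ → EuclideanSpace ℝ (Fin d) → EuclideanSpace ℝ (Fin d))
    (hV : Measurable (Function.uncurry V))
    (hbound : (∫⁻ t in Set.Icc (0:ℝ) T, ⨆ x, (‖V t x‖₊ : ℝ≥0∞)) < ⊤) :
    MeasurableSet[borel C(Set.Icc (0:ℝ) T, EuclideanSpace ℝ (Fin d))]
      {γ : C(Set.Icc (0:ℝ) T, EuclideanSpace ℝ (Fin d)) |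
        ∀ t : Set.Icc (0:ℝ) T,
          γ t - γ ⟨0, Set.left_mem_Icc.mpr hT⟩ =
            ∫ s in (0:ℝ)..(t:ℝ), V s (γ (Set.projIcc 0 T hT s))} := by
  letI : MeasurableSpace C(Set.Icc (0:ℝ) T, EuclideanSpace ℝ (Fin d)) := borel _
  haveI : BorelSpace C(Set.Icc (0:ℝ) T, EuclideanSpace ℝ (Fin d)) := ⟨rfl⟩
  have hproj : Continuous (Set.projIcc (0:ℝ) T hT) := continuous_projIcc
  have hev : Continuous fun p : C(Set.Icc (0:ℝ) T, EuclideanSpace ℝ (Fin d)) × ℝ =>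
      (p.1 (Set.projIcc 0 T hT p.2) : EuclideanSpace ℝ (Fin d)) :=
    ContinuousEval.continuous_eval.comp
      (continuous_fst.prodMk (hproj.comp continuous_snd))
  have hF : Measurable fun p : C(Set.Icc (0:ℝ) T, EuclideanSpace ℝ (Fin d)) × ℝ =>
      V p.2 (p.1 (Set.projIcc 0 T hT p.2)) := by
    have hg : Measurable fun p : C(Set.Icc (0:ℝ) T, EuclideanSpace ℝ (Fin d)) × ℝ =>
        (p.2, p.1 (Set.projIcc 0 T hT p.2)) := measurable_snd.prodMk hev.measurable
    exact hV.comp hg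
  -- for each fixed γ, the integrand in s is integrable on [0, T]
  have hint : ∀ γ : C(Set.Icc (0:ℝ) T, EuclideanSpace ℝ (Fin d)),
      IntegrableOn (fun s => V s (γ (Set.projIcc 0 T hT s))) (Set.Icc 0 T) := by
    intro γ
    have hm : Measurable fun s => V s (γ (Set.projIcc 0 T hT s)) :=
      hF.comp (measurable_const.prodMk measurable_id)
    refine ⟨hm.aestronglyMeasurable.restrict, ?_⟩
    refine lt_of_le_of_lt (lintegral_mono fun s => ?_) hbound
    exact le_iSup (fun x : EuclideanSpace ℝ (Fin d) => (‖V s x‖₊ : ℝ≥0∞))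
      (γ (Set.projIcc 0 T hT s))
  -- measurability of γ ↦ ∫ s in 0..t, ...
  have hmeasInt : ∀ t : Set.Icc (0:ℝ) T,
      Measurable fun γ : C(Set.Icc (0:ℝ) T, EuclideanSpace ℝ (Fin d)) =>
      ∫ s in (0:ℝ)..(t:ℝ), V s (γ (Set.projIcc 0 T hT s)) := by
    intro t
    have h0t : (0:ℝ) ≤ (t:ℝ) := t.2.1
    have heq : (fun γ : C(Set.Icc (0:ℝ) T, EuclideanSpace ℝ (Fin d)) =>
          ∫ s in (0:ℝ)..(t:ℝ), V s (γ (Set.projIcc 0 T hT s)))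
        = fun γ => ∫ s in Set.Ioc (0:ℝ) (t:ℝ), V s (γ (Set.projIcc 0 T hT s)) := by
      funext γ; exact intervalIntegral.integral_of_le h0t
    rw [heq]
    exact (hF.stronglyMeasurable.integral_prod_right'
      (ν := volume.restrict (Set.Ioc (0:ℝ) (t:ℝ)))).measurable
  -- measurability of the equality set at a fixed time
  have hA : ∀ t : Set.Icc (0:ℝ) T,
      MeasurableSet {γ : C(Set.Icc (0:ℝ) T, EuclideanSpace ℝ (Fin d)) |
      γ t - γ ⟨0, Set.left_mem_Icc.mpr hT⟩ =
        ∫ s in (0:ℝ)..(t:ℝ), V s (γ (Set.projIcc 0 T hT s))} := by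
    intro t
    have h1 : Measurable fun γ : C(Set.Icc (0:ℝ) T, EuclideanSpace ℝ (Fin d)) =>
        γ t - γ ⟨0, Set.left_mem_Icc.mpr hT⟩ :=
      ((ContinuousEvalConst.continuous_eval_const t).sub
        (ContinuousEvalConst.continuous_eval_const _)).measurable
    exact measurableSet_eq_fun h1 (hmeasInt t)
  -- reduce to a countable dense set of times
  obtain ⟨D, hDc, hDd⟩ := TopologicalSpace.exists_countable_dense (Set.Icc (0:ℝ) T)
  have hset : {γ : C(Set.Icc (0:ℝ) T, EuclideanSpace ℝ (Fin d)) | ∀ t : Set.Icc (0:ℝ) T,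
      γ t - γ ⟨0, Set.left_mem_Icc.mpr hT⟩ =
        ∫ s in (0:ℝ)..(t:ℝ), V s (γ (Set.projIcc 0 T hT s))}
      = ⋂ t ∈ D, {γ : C(Set.Icc (0:ℝ) T, EuclideanSpace ℝ (Fin d)) |
      γ t - γ ⟨0, Set.left_mem_Icc.mpr hT⟩ =
        ∫ s in (0:ℝ)..(t:ℝ), V s (γ (Set.projIcc 0 T hT s))} := by
    ext γ
    simp only [Set.mem_setOf_eq, Set.mem_iInter]
    refine ⟨fun h t _ => h t, fun h t => ?_⟩
    have hc1 : Continuous fun t : Set.Icc (0:ℝ) T =>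
        γ t - γ ⟨0, Set.left_mem_Icc.mpr hT⟩ := γ.continuous.sub continuous_const
    have hc2 : Continuous fun t : Set.Icc (0:ℝ) T =>
        ∫ s in (0:ℝ)..(t:ℝ), V s (γ (Set.projIcc 0 T hT s)) := by
      have hco : ContinuousOn (fun x : ℝ =>
          ∫ s in (0:ℝ)..x, V s (γ (Set.projIcc 0 T hT s))) (Set.uIcc 0 T) := by
        apply intervalIntegral.continuousOn_primitive_interval
        rw [Set.uIcc_of_le hT]; exact hint γ
      rw [Set.uIcc_of_le hT] at hco
      exact hco.comp_continuous continuous_subtype_val fun t => t.2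
    exact congrFun (Continuous.ext_on hDd hc1 hc2 fun x hx => h x hx) t
  rw [hset]
  exact MeasurableSet.biInter hDc fun t _ => hA t
end
end

section
/- Let V be a Borel vector field on [0,T] × ℝ^d and let B ⊆ [0,T] × ℝ^d be a Borel set such that for each (S,x) ∈ B there exists one and only one solution γ of the ODE γ' = V(t,γ) on [0,T] with γ(S) = x. Then the flow map X(S,t,x) := γ(t) (where γ is the unique solution with γ(S)=x) is Borel measurable on the set {(S,t,x) : (S,x) ∈ B, t ∈ [0,T]}. -/
/-!
The integral equation only has to hold at countably many times, and for a fixed time both of its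
sides are Borel functions of the curve; so the solutions form a Borel subset of the Polish space
`C([0,T], ℝ^d)`. By existence and uniqueness, `(S, γ) ↦ (S, γ(S))` maps the Borel set
`D = {(S, γ) : γ is a solution, (S, γ(S)) ∈ B}` bijectively onto `B`. By the Lusin–Souslin
theorem its inverse `B → D` is Borel, and `X(S, t, x)` is that inverse evaluated at time `t`.
-/

open MeasureTheory Set
open scoped ENNReal NNReal Topology

noncomputable section

/-- A solution of the ODE `γ' = V(t,γ)` on `[0,T]`, in integral form. -/
def IsSolution {d : ℕ} (T : ℝ) (hT : 0 ≤ T)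
    (V : ℝ → EuclideanSpace ℝ (Fin d) → EuclideanSpace ℝ (Fin d))
    (γ : C(Set.Icc (0:ℝ) T, EuclideanSpace ℝ (Fin d))) : Prop :=
  ∀ t : Set.Icc (0:ℝ) T,
    γ t - γ ⟨0, Set.left_mem_Icc.mpr hT⟩ =
      ∫ s in (0:ℝ)..(t:ℝ), V s (γ (Set.projIcc 0 T hT s))

theorem Set.EqOn.Icc_of_dense {α X : Type*} [LinearOrder α] [TopologicalSpace α] [OrderTopology α]
    [DenselyOrdered α] [TopologicalSpace X] [T2Space X] {f g : α → X} {D : Set α} (hD : Dense D)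
    {a b : α} (hab : a < b) (hf : ContinuousOn f (Icc a b)) (hg : ContinuousOn g (Icc a b))
    (h : EqOn f g (D ∩ Ioo a b)) : EqOn f g (Icc a b) := by
  refine h.of_subset_closure hf hg (inter_subset_right.trans Ioo_subset_Icc_self) ?_
  rw [← closure_Ioo hab.ne, inter_comm]
  exact closure_minimal (hD.open_subset_closure_inter isOpen_Ioo) isClosed_closure

/-- If `g` is not integrable on `[a, t]`, the integral up to `t` is `0` by convention; the
equation is then recovered at `t` from the dense times to the right of `t`, where it also reads
`u s = u a`. -/
theorem sub_eq_integral_of_dense {E : Type*} [NormedAddCommGroup E] [NormedSpace ℝ E]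
    {u g : ℝ → E} {D : Set ℝ} (hD : Dense D) {a b : ℝ} (hu : ContinuousOn u (Icc a b))
    (H : ∀ t ∈ insert b (D ∩ Icc a b), u t - u a = ∫ s in a..t, g s) :
    ∀ t ∈ Icc a b, u t - u a = ∫ s in a..t, g s := by
  rintro t ⟨hat, htb⟩
  rcases hat.eq_or_lt with rfl | hat
  · simp
  have hu_sub : ∀ {x y}, a ≤ x → y ≤ b → ContinuousOn (fun s => u s - u a) (Icc x y) :=
    fun hx hy => (hu.mono (Icc_subset_Icc hx hy)).sub continuousOn_const
  by_cases hg : IntervalIntegrable g volume a t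
  · have hprim : ContinuousOn (fun x => ∫ s in a..x, g s) (Icc a t) := by
      simpa [uIcc_of_le hat.le] using
        intervalIntegral.continuousOn_primitive_interval' hg left_mem_uIcc
    refine EqOn.Icc_of_dense hD hat (hu_sub le_rfl htb) hprim ?_ (right_mem_Icc.2 hat.le)
    rintro s ⟨hsD, hs⟩
    exact H s (Or.inr ⟨hsD, hs.1.le, hs.2.le.trans htb⟩)
  rw [intervalIntegral.integral_undef hg]
  rcases htb.eq_or_lt with rfl | htb
  · simpa [intervalIntegral.integral_undef hg] using H t (mem_insert _ _)
  refine EqOn.Icc_of_dense hD htb (hu_sub hat.le le_rfl) continuousOn_const ?_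
    (left_mem_Icc.2 htb.le)
  rintro s ⟨hsD, hs⟩
  have hgs : ¬IntervalIntegrable g volume a s := fun h =>
    hg (h.mono_set (uIcc_subset_uIcc left_mem_uIcc (mem_uIcc_of_le hat.le hs.1.le)))
  simpa [intervalIntegral.integral_undef hgs] using
    H s (Or.inr ⟨hsD, (hat.trans hs.1).le, hs.2.le⟩)

theorem MeasureTheory.StronglyMeasurable.intervalIntegral_prod_right {α E : Type*}
    [MeasurableSpace α] [NormedAddCommGroup E] [NormedSpace ℝ E] {f : α × ℝ → E}
    (hf : StronglyMeasurable f) (a b : ℝ) : StronglyMeasurable fun x => ∫ s in a..b, f (x, s) :=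
  hf.integral_prod_right'.sub hf.integral_prod_right'

theorem MeasurableSet.exists_measurable_rightInvOn_of_injOn {α β : Type*} [MeasurableSpace α]
    [StandardBorelSpace α] [MeasurableSpace β] [MeasurableSpace.CountablySeparated β]
    {f : α → β} {s : Set α} {t : Set β} (hs : MeasurableSet s) (hf : Measurable f)
    (hinj : InjOn f s) (hsurj : SurjOn f s t) :
    ∃ g : t → α, Measurable g ∧ ∀ b, g b ∈ s ∧ f (g b) = b := by
  have := hs.standardBorel
  have hemb : MeasurableEmbedding (s.domRestrict f) :=
    (hf.comp measurable_subtype_coe).measurableEmbedding hinj.injective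
  have hrange (b : t) : (b : β) ∈ range (s.domRestrict f) := by
    obtain ⟨a, ha, hab⟩ := hsurj b.2
    exact ⟨⟨a, ha⟩, hab⟩
  let r (b : t) : s := rangeSplitting (s.domRestrict f) ⟨b, hrange b⟩
  have hr : Measurable r := hemb.measurable_rangeSplitting.comp measurable_subtype_coe.subtype_mk
  refine ⟨fun b => r b, measurable_subtype_coe.comp hr, fun b => ⟨(r b).2, ?_⟩⟩
  exact apply_rangeSplitting (s.domRestrict f) ⟨b, hrange b⟩

theorem ContinuousMap.continuous_eval_projIcc {Y : Type*} [TopologicalSpace Y] {a b : ℝ}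
    (h : a ≤ b) : Continuous fun p : C(Icc a b, Y) × ℝ => p.1 (projIcc a b h p.2) :=
  continuous_eval.comp (continuous_fst.prodMk ((continuous_projIcc (h := h)).comp continuous_snd))

local instance ContinuousMap.borelMeasurableSpace {X Y : Type*} [TopologicalSpace X]
    [TopologicalSpace Y] : MeasurableSpace C(X, Y) := borel _

local instance ContinuousMap.borelSpace {X Y : Type*} [TopologicalSpace X]
    [TopologicalSpace Y] : BorelSpace C(X, Y) := ⟨rfl⟩

section

variable {d : ℕ} {T : ℝ} (hT : 0 ≤ T)
  {V : ℝ → EuclideanSpace ℝ (Fin d) → EuclideanSpace ℝ (Fin d)}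

theorem isSolution_iff_forall_mem_Icc (γ : C(Icc (0:ℝ) T, EuclideanSpace ℝ (Fin d))) :
    IsSolution T hT V γ ↔ ∀ t ∈ Icc 0 T, γ (projIcc 0 T hT t) - γ (projIcc 0 T hT 0) =
      ∫ s in (0:ℝ)..t, V s (γ (projIcc 0 T hT s)) := by
  simp +contextual [IsSolution, projIcc_of_mem, projIcc_left]

theorem isSolution_iff_forall_rat (γ : C(Icc (0:ℝ) T, EuclideanSpace ℝ (Fin d))) :
    IsSolution T hT V γ ↔ ∀ t ∈ insert T (range ((↑) : ℚ → ℝ) ∩ Icc 0 T),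
      γ (projIcc 0 T hT t) - γ (projIcc 0 T hT 0) =
        ∫ s in (0:ℝ)..t, V s (γ (projIcc 0 T hT s)) := by
  rw [isSolution_iff_forall_mem_Icc]
  refine ⟨fun h t ht => h t ?_, sub_eq_integral_of_dense Rat.denseRange_cast
    (γ.continuous.comp continuous_projIcc).continuousOn⟩
  rcases ht with rfl | ht
  exacts [right_mem_Icc.2 hT, ht.2]

theorem measurableSet_setOf_isSolution (hV : Measurable (Function.uncurry V)) :
    MeasurableSet {γ | IsSolution T hT V γ} := by
  have hF : Measurable fun p : C(Icc (0:ℝ) T, EuclideanSpace ℝ (Fin d)) × ℝ =>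
      V p.2 (p.1 (projIcc 0 T hT p.2)) :=
    hV.comp (measurable_snd.prodMk (ContinuousMap.continuous_eval_projIcc hT).measurable)
  simp_rw [isSolution_iff_forall_rat, ofPred_forall]
  refine .biInter (((countable_range _).mono inter_subset_left).insert T) fun t _ =>
    measurableSet_eq_fun ?_ (hF.stronglyMeasurable.intervalIntegral_prod_right 0 t).measurable
  exact ((continuous_eval_const _).sub (continuous_eval_const _)).measurable

theorem exists_measurable_solution_of_existsUnique (hV : Measurable (Function.uncurry V))
    {B : Set (ℝ × EuclideanSpace ℝ (Fin d))} (hB : MeasurableSet B)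
    (hBsub : ∀ p ∈ B, p.1 ∈ Set.Icc (0:ℝ) T)
    (huniq : ∀ p : ℝ × EuclideanSpace ℝ (Fin d), ∀ hp : p ∈ B,
      ∃! γ : C(Set.Icc (0:ℝ) T, EuclideanSpace ℝ (Fin d)),
        IsSolution T hT V γ ∧ γ ⟨p.1, hBsub p hp⟩ = p.2) :
    ∃ Γ : B → C(Icc (0:ℝ) T, EuclideanSpace ℝ (Fin d)), Measurable Γ ∧
      ∀ p : B, IsSolution T hT V (Γ p) ∧ Γ p (projIcc 0 T hT p.1.1) = p.1.2 := by
  set Φ : ℝ × C(Icc (0:ℝ) T, EuclideanSpace ℝ (Fin d)) → ℝ × EuclideanSpace ℝ (Fin d) :=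
    fun p => (p.1, p.2 (projIcc 0 T hT p.1))
  have hΦ : Continuous Φ :=
    continuous_fst.prodMk ((ContinuousMap.continuous_eval_projIcc hT).comp continuous_swap)
  have hinit (p : ℝ × EuclideanSpace ℝ (Fin d)) (hp : p ∈ B)
      {γ : C(Icc (0:ℝ) T, EuclideanSpace ℝ (Fin d))} :
      γ (projIcc 0 T hT p.1) = γ ⟨p.1, hBsub p hp⟩ := by
    rw [projIcc_of_mem]
  set D := Prod.snd ⁻¹' {γ | IsSolution T hT V γ} ∩ Φ ⁻¹' B
  have hinj : InjOn Φ D := by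
    rintro ⟨S, γ₁⟩ ⟨hγ₁, hB₁⟩ ⟨S', γ₂⟩ ⟨hγ₂, -⟩ hΦ₁₂
    obtain ⟨rfl, h₁₂⟩ := Prod.mk.inj hΦ₁₂
    refine Prod.ext rfl ((huniq _ hB₁).unique ⟨hγ₁, ?_⟩ ⟨hγ₂, ?_⟩)
    · exact (hinit _ hB₁).symm
    · exact (hinit _ hB₁).symm.trans h₁₂.symm
  have hsurj : SurjOn Φ D B := by
    intro p hp
    obtain ⟨γ, ⟨hγ, hγp⟩, -⟩ := huniq p hp
    have hΦp : Φ (p.1, γ) = p := Prod.ext rfl ((hinit p hp).trans hγp)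
    exact ⟨(p.1, γ), ⟨hγ, hΦp ▸ hp⟩, hΦp⟩
  obtain ⟨g, hg, hgΦ⟩ := MeasurableSet.exists_measurable_rightInvOn_of_injOn
    ((measurable_snd (measurableSet_setOf_isSolution hT hV)).inter (hΦ.measurable hB))
    hΦ.measurable hinj hsurj
  refine ⟨fun p => (g p).2, measurable_snd.comp hg, fun p => ⟨(hgΦ p).1.1, ?_⟩⟩
  obtain ⟨h₁, h₂⟩ := Prod.mk.inj (hgΦ p).2
  exact h₁ ▸ h₂

end

/-- If `B ⊆ [0,T] × ℝ^d` is Borel and through each `(S,x) ∈ B`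
there is exactly one solution of the ODE, then the flow map
`X(S,t,x) = γ(t)` is Borel on `{(S,t,x) : (S,x) ∈ B, t ∈ [0,T]}`. -/
theorem stmt2 (d : ℕ) (T : ℝ) (hT : 0 ≤ T)
    (V : ℝ → EuclideanSpace ℝ (Fin d) → EuclideanSpace ℝ (Fin d))
    (hV : Measurable (Function.uncurry V))
    (B : Set (ℝ × EuclideanSpace ℝ (Fin d)))
    (hB : MeasurableSet B)
    (hBsub : ∀ p ∈ B, p.1 ∈ Set.Icc (0:ℝ) T)
    (huniq : ∀ p : ℝ × EuclideanSpace ℝ (Fin d), ∀ hp : p ∈ B,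
      ∃! γ : C(Set.Icc (0:ℝ) T, EuclideanSpace ℝ (Fin d)),
        IsSolution T hT V γ ∧ γ ⟨p.1, hBsub p hp⟩ = p.2) :
    ∃ X : ℝ × ℝ × EuclideanSpace ℝ (Fin d) → EuclideanSpace ℝ (Fin d),
      Measurable (fun q : {q : ℝ × ℝ × EuclideanSpace ℝ (Fin d) //
          (q.1, q.2.2) ∈ B ∧ q.2.1 ∈ Set.Icc (0:ℝ) T} => X q.1) ∧
      ∀ (S t : ℝ) (x : EuclideanSpace ℝ (Fin d)) (hSx : (S, x) ∈ B)
        (ht : t ∈ Set.Icc (0:ℝ) T)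
        (γ : C(Set.Icc (0:ℝ) T, EuclideanSpace ℝ (Fin d))),
        IsSolution T hT V γ → γ ⟨S, hBsub _ hSx⟩ = x →
        X (S, t, x) = γ ⟨t, ht⟩ := by
  classical
  obtain ⟨Γ, hΓ, hΓsol⟩ := exists_measurable_solution_of_existsUnique hT hV hB hBsub huniq
  refine ⟨fun q => if h : (q.1, q.2.2) ∈ B then Γ ⟨_, h⟩ (projIcc 0 T hT q.2.1) else 0, ?_, ?_⟩
  · convert (ContinuousMap.continuous_eval_projIcc hT).measurable.comp
      ((hΓ.comp (measurable_subtype_coe.fst.prodMk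
        measurable_subtype_coe.snd.snd).subtype_mk).prodMk measurable_subtype_coe.snd.fst) using 1
    funext q
    exact dif_pos q.2.1
  · intro S t x hSx ht γ hγ hγS
    obtain ⟨hsol, hinit⟩ := hΓsol ⟨(S, x), hSx⟩
    dsimp only
    rw [dif_pos hSx, (huniq _ hSx).unique ⟨hsol, ?_⟩ ⟨hγ, hγS⟩, projIcc_of_mem hT ht]
    rwa [← projIcc_of_mem hT (hBsub _ hSx)]
end
end

section
/- If X(t,s,x) is a flow of solutions of the ODE γ' = V(t,γ), then for each S ∈ [0,T] and each bounded signed Borel measure μ on ℝ^d, the curve of measures μ_t := (X_S^t)_♯ μ is a solution of the continuity equation ∂_t μ_t + div(V_t μ_t) = 0, meaning that for every C¹ bounded Lipschitz function u : ℝ^d → ℝ the function t ↦ ∫ u dμ_t is absolutely continuous with derivative ∫ du_x(V(t,x)) dμ_t(x). -/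
/-!
Write `Y σ x := X(S, σ, x)`. Along each trajectory, `σ ↦ u (Y σ x)` is absolutely continuous
(Lipschitz `u` composed with a primitive of an integrable function), so the fundamental theorem
of calculus for absolutely continuous functions gives
`u (Y t x) - u (Y S x) = ∫ σ in S..t, du (Y σ x) (V σ (Y σ x))`. The integrand is bounded by
`Lip(u) · sup ‖V σ‖`, which is integrable in time, so Fubini integrates this identity against any
finite measure. For signed `μ`, the Jordan decomposition of `(Y σ)_♯ μ` is in general not the
pushforward of that of `μ`; but the integral against a signed measure `ν` may be computed from
any decomposition `ν = a - b` into finite measures, because the Jordan decomposition is the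
minimal one.
-/

open MeasureTheory Set
open scoped ENNReal NNReal Topology

noncomputable section

/-- `X` is a flow of solutions of the ODE. -/
def IsFlow {d : ℕ} (T : ℝ) (hT : 0 ≤ T)
    (V : ℝ → EuclideanSpace ℝ (Fin d) → EuclideanSpace ℝ (Fin d))
    (X : ℝ → ℝ → EuclideanSpace ℝ (Fin d) → EuclideanSpace ℝ (Fin d)) : Prop :=
  ∀ (t : ℝ) (ht : t ∈ Set.Icc (0:ℝ) T) (x : EuclideanSpace ℝ (Fin d)),
    ∃ γ : C(Set.Icc (0:ℝ) T, EuclideanSpace ℝ (Fin d)),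
      IsSolution T hT V γ ∧ γ ⟨t, ht⟩ = x ∧
      (∀ s : Set.Icc (0:ℝ) T, X t s x = γ s) ∧
      (∀ γ' : C(Set.Icc (0:ℝ) T, EuclideanSpace ℝ (Fin d)),
        IsSolution T hT V γ' → γ' ⟨t, ht⟩ = x → γ' = γ)

/-- Integral of a function against a signed measure, via the Jordan
decomposition. -/
def sInt {d : ℕ} (μ : MeasureTheory.SignedMeasure (EuclideanSpace ℝ (Fin d)))
    (f : EuclideanSpace ℝ (Fin d) → ℝ) : ℝ :=
  (∫ x, f x ∂μ.toJordanDecomposition.posPart) -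
    ∫ x, f x ∂μ.toJordanDecomposition.negPart

open MeasureTheory Set Filter Function
open scoped Interval

namespace MeasureTheory

theorem Measure.MutuallySingular.le_of_add_eq_add {α : Type*} [MeasurableSpace α]
    {p n a b : Measure α} (hpn : p ⟂ₘ n) (h : p + b = n + a) : p ≤ a := by
  obtain ⟨A, -, hpA, hnA⟩ := hpn
  refine Measure.le_iff'.2 fun s => ?_
  calc p s = p (s \ A) := (measure_sdiff_null hpA).symm
    _ ≤ (p + b) (s \ A) := by rw [Measure.add_apply]; exact le_self_add
    _ = a (s \ A) := by
      rw [h, Measure.add_apply, measure_mono_null (fun x hx => hx.2) hnA, zero_add]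
    _ ≤ a s := measure_mono sdiff_subset

namespace SignedMeasure

variable {α β : Type*} [MeasurableSpace α] [MeasurableSpace β]

theorem posPart_add_eq_negPart_add {ν : SignedMeasure α} {a b : Measure α}
    [IsFiniteMeasure a] [IsFiniteMeasure b] (h : ν = a.toSignedMeasure - b.toSignedMeasure) :
    ν.toJordanDecomposition.posPart + b = ν.toJordanDecomposition.negPart + a := by
  have hν : ν.toJordanDecomposition.posPart.toSignedMeasure -
      ν.toJordanDecomposition.negPart.toSignedMeasure = a.toSignedMeasure - b.toSignedMeasure :=
    ν.toSignedMeasure_toJordanDecomposition.trans h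
  rw [sub_eq_sub_iff_add_eq_add] at hν
  rw [← Measure.toSignedMeasure_eq_toSignedMeasure_iff, Measure.toSignedMeasure_add,
    Measure.toSignedMeasure_add, hν, add_comm]

theorem map_eq_toSignedMeasure_sub (ν : SignedMeasure α) {f : α → β} (hf : Measurable f) :
    ν.map f = (ν.toJordanDecomposition.posPart.map f).toSignedMeasure -
      (ν.toJordanDecomposition.negPart.map f).toSignedMeasure := by
  ext s hs
  conv_lhs => rw [← ν.toSignedMeasure_toJordanDecomposition]
  rw [VectorMeasure.map_apply _ hf hs, JordanDecomposition.toSignedMeasure, sub_apply, sub_apply,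
    Measure.toSignedMeasure_apply_measurable hs, Measure.toSignedMeasure_apply_measurable hs,
    Measure.toSignedMeasure_apply_measurable (hf hs),
    Measure.toSignedMeasure_apply_measurable (hf hs),
    map_measureReal_apply hf hs, map_measureReal_apply hf hs]

end SignedMeasure

end MeasureTheory

section SignedIntegral

variable {d : ℕ}

theorem sInt_eq_integral_sub_integral {ν : SignedMeasure (EuclideanSpace ℝ (Fin d))}
    {a b : Measure (EuclideanSpace ℝ (Fin d))} [IsFiniteMeasure a] [IsFiniteMeasure b]
    (h : ν = a.toSignedMeasure - b.toSignedMeasure) {g : EuclideanSpace ℝ (Fin d) → ℝ}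
    (hga : Integrable g a) (hgb : Integrable g b) :
    sInt ν g = ∫ x, g x ∂a - ∫ x, g x ∂b := by
  have key := SignedMeasure.posPart_add_eq_negPart_add h
  have hpos := ν.toJordanDecomposition.mutuallySingular.le_of_add_eq_add key
  have hneg := ν.toJordanDecomposition.mutuallySingular.symm.le_of_add_eq_add key.symm
  have hsum := congrArg (fun m => ∫ x, g x ∂m) key
  rw [integral_add_measure (hga.mono_measure hpos) hgb,
    integral_add_measure (hgb.mono_measure hneg) hga] at hsum
  rw [sInt]
  linarith

theorem sInt_map (μ : SignedMeasure (EuclideanSpace ℝ (Fin d)))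
    {f : EuclideanSpace ℝ (Fin d) → EuclideanSpace ℝ (Fin d)} (hf : Measurable f)
    {g : EuclideanSpace ℝ (Fin d) → ℝ} (hg : Measurable g)
    (hgp : Integrable (fun x => g (f x)) μ.toJordanDecomposition.posPart)
    (hgn : Integrable (fun x => g (f x)) μ.toJordanDecomposition.negPart) :
    sInt (μ.map f) g = ∫ x, g (f x) ∂μ.toJordanDecomposition.posPart -
      ∫ x, g (f x) ∂μ.toJordanDecomposition.negPart := by
  rw [sInt_eq_integral_sub_integral (μ.map_eq_toSignedMeasure_sub hf)
      ((integrable_map_measure hg.aestronglyMeasurable hf.aemeasurable).2 hgp)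
      ((integrable_map_measure hg.aestronglyMeasurable hf.aemeasurable).2 hgn),
    integral_map hf.aemeasurable hg.aestronglyMeasurable,
    integral_map hf.aemeasurable hg.aestronglyMeasurable]

end SignedIntegral

theorem AbsolutelyContinuousOnInterval.of_dist_le {X Y : Type*} [PseudoMetricSpace X]
    [PseudoMetricSpace Y] {f : ℝ → X} {g : ℝ → Y} {a b : ℝ} (K : ℝ)
    (hg : AbsolutelyContinuousOnInterval g a b)
    (hfg : ∀ x ∈ uIcc a b, ∀ y ∈ uIcc a b, dist (f x) (f y) ≤ K * dist (g x) (g y)) :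
    AbsolutelyContinuousOnInterval f a b := by
  have hKg := Tendsto.const_mul K hg
  rw [mul_zero] at hKg
  refine squeeze_zero' (Eventually.of_forall fun _ => Finset.sum_nonneg fun _ _ => dist_nonneg)
    ?_ hKg
  filter_upwards [eventually_inf_principal.2 (Eventually.of_forall fun _ h => h)] with E hE
  rw [Finset.mul_sum]
  exact Finset.sum_le_sum fun i hi => hfg _ (hE.1 i hi).1 _ (hE.1 i hi).2

theorem LipschitzWith.integral_fderiv_primitive_eq_sub {E : Type*} [NormedAddCommGroup E]
    [NormedSpace ℝ E] [CompleteSpace E] {u : E → ℝ} {L : ℝ≥0} (hL : LipschitzWith L u)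
    (hud : Differentiable ℝ u) {h : ℝ → E} {a b : ℝ} (hh : IntervalIntegrable h volume a b)
    (x₀ : E) :
    ∫ σ in a..b, fderiv ℝ u (x₀ + ∫ τ in a..σ, h τ) (h σ) =
      u (x₀ + ∫ τ in a..b, h τ) - u x₀ := by
  set c : ℝ → E := fun s => x₀ + ∫ τ in a..s, h τ with hc
  have hsub : ∀ x ∈ uIcc a b, IntervalIntegrable h volume a x := fun x hx =>
    hh.mono_set (uIcc_subset_uIcc left_mem_uIcc hx)
  have hac : AbsolutelyContinuousOnInterval (fun s => u (c s)) a b := by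
    refine (hh.norm.absolutelyContinuousOnInterval_intervalIntegral left_mem_uIcc).of_dist_le L
      fun x hx y hy => ?_
    calc dist (u (c x)) (u (c y)) ≤ L * dist (c x) (c y) := hL.dist_le_mul _ _
      _ ≤ L * dist (∫ τ in a..x, ‖h τ‖) (∫ τ in a..y, ‖h τ‖) := by
        gcongr
        rw [dist_eq_norm, dist_eq_norm, Real.norm_eq_abs, hc, add_sub_add_left_eq_sub,
          intervalIntegral.integral_interval_sub_left (hsub x hx) (hsub y hy),
          intervalIntegral.integral_interval_sub_left (hsub x hx).norm (hsub y hy).norm]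
        exact intervalIntegral.norm_integral_le_abs_integral_norm
  have hderiv : ∀ᵐ σ, σ ∈ Ι a b → fderiv ℝ u (c σ) (h σ) = deriv (fun s => u (c s)) σ := by
    filter_upwards [hh.ae_hasDerivAt_integral] with σ hσ hσab
    have hcσ := (hσ (uIoc_subset_uIcc hσab) a left_mem_uIcc).const_add x₀
    exact ((hud _).hasFDerivAt.comp_hasDerivAt σ hcσ).deriv.symm
  rw [intervalIntegral.integral_congr_ae hderiv, hac.integral_deriv_eq_sub]
  simp [c]

theorem LipschitzWith.nnnorm_fderiv_apply_le {E : Type*} [NormedAddCommGroup E]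
    [NormedSpace ℝ E] {u : E → ℝ} {L : ℝ≥0} (hL : LipschitzWith L u) (x v : E) :
    ‖fderiv ℝ u x v‖₊ ≤ L * ‖v‖₊ :=
  ((fderiv ℝ u x).le_opNNNorm v).trans <| mul_le_mul_of_nonneg_right
    (by exact_mod_cast norm_fderiv_le_of_lipschitz ℝ hL) zero_le

section Trajectories

variable {d : ℕ} {T : ℝ} {V : ℝ → EuclideanSpace ℝ (Fin d) → EuclideanSpace ℝ (Fin d)}

theorem intervalIntegrable_apply_projIcc {hT : 0 ≤ T} (hV : Measurable (uncurry V))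
    (hbound : (∫⁻ t in Icc (0:ℝ) T, ⨆ x, (‖V t x‖₊ : ℝ≥0∞)) < ⊤)
    (γ : C(Icc (0:ℝ) T, EuclideanSpace ℝ (Fin d))) {a b : ℝ} (ha : a ∈ Icc 0 T)
    (hb : b ∈ Icc 0 T) :
    IntervalIntegrable (fun σ => V σ (γ (projIcc 0 T hT σ))) volume a b :=
  IntegrableOn.intervalIntegrable <| IntegrableOn.mono_set
    ⟨(hV.comp (measurable_id.prodMk
        (γ.continuous.comp continuous_projIcc).measurable)).aestronglyMeasurable,
      (lintegral_mono fun σ => le_iSup (fun x => (‖V σ x‖₊ : ℝ≥0∞)) _).trans_lt hbound⟩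
    (uIcc_subset_Icc ha hb)

theorem IsSolution.eq_add_integral {hT : 0 ≤ T} (hV : Measurable (uncurry V))
    (hbound : (∫⁻ t in Icc (0:ℝ) T, ⨆ x, (‖V t x‖₊ : ℝ≥0∞)) < ⊤)
    {γ : C(Icc (0:ℝ) T, EuclideanSpace ℝ (Fin d))} (hγ : IsSolution T hT V γ)
    {a b : ℝ} (ha : a ∈ Icc 0 T) (hb : b ∈ Icc 0 T) :
    γ (projIcc 0 T hT b) =
      γ (projIcc 0 T hT a) + ∫ σ in a..b, V σ (γ (projIcc 0 T hT σ)) := by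
  have hγx : ∀ x (hx : x ∈ Icc 0 T), γ (projIcc 0 T hT x) - γ ⟨0, left_mem_Icc.2 hT⟩ =
      ∫ σ in (0:ℝ)..x, V σ (γ (projIcc 0 T hT σ)) := fun x hx => by
    rw [projIcc_of_mem hT hx]
    exact hγ ⟨x, hx⟩
  have h0 := left_mem_Icc.2 hT
  rw [← intervalIntegral.integral_interval_sub_left
    (intervalIntegrable_apply_projIcc hV hbound γ h0 hb)
    (intervalIntegrable_apply_projIcc hV hbound γ h0 ha), ← hγx b hb, ← hγx a ha]
  abel

theorem IsSolution.sub_eq_integral_fderiv {hT : 0 ≤ T} (hV : Measurable (uncurry V))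
    (hbound : (∫⁻ t in Icc (0:ℝ) T, ⨆ x, (‖V t x‖₊ : ℝ≥0∞)) < ⊤)
    {γ : C(Icc (0:ℝ) T, EuclideanSpace ℝ (Fin d))} (hγ : IsSolution T hT V γ)
    {u : EuclideanSpace ℝ (Fin d) → ℝ} {L : ℝ≥0} (hL : LipschitzWith L u)
    (hud : Differentiable ℝ u) {a b : ℝ} (ha : a ∈ Icc 0 T) (hb : b ∈ Icc 0 T) :
    u (γ (projIcc 0 T hT b)) - u (γ (projIcc 0 T hT a)) =
      ∫ σ in a..b, fderiv ℝ u (γ (projIcc 0 T hT σ)) (V σ (γ (projIcc 0 T hT σ))) := by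
  rw [hγ.eq_add_integral hV hbound ha hb, ← hL.integral_fderiv_primitive_eq_sub hud
    (intervalIntegrable_apply_projIcc hV hbound γ ha hb)]
  refine intervalIntegral.integral_congr fun σ hσ => ?_
  rw [← hγ.eq_add_integral hV hbound ha (uIcc_subset_Icc ha hb hσ)]

end Trajectories

section Transport

variable {d : ℕ} {T : ℝ} {V : ℝ → EuclideanSpace ℝ (Fin d) → EuclideanSpace ℝ (Fin d)}
  {α : Type*} [MeasurableSpace α] {Y : ℝ → α → EuclideanSpace ℝ (Fin d)}
  {u : EuclideanSpace ℝ (Fin d) → ℝ} {L : ℝ≥0}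

theorem integrable_fderiv_apply_prod (hV : Measurable (uncurry V))
    (hbound : (∫⁻ t in Icc (0:ℝ) T, ⨆ x, (‖V t x‖₊ : ℝ≥0∞)) < ⊤)
    (hY : Measurable (uncurry Y)) (hL : LipschitzWith L u) {s : Set ℝ} (hs : s ⊆ Icc 0 T)
    (ν : Measure α) [IsFiniteMeasure ν] :
    Integrable (uncurry fun σ x => fderiv ℝ u (Y σ x) (V σ (Y σ x)))
      ((volume.restrict s).prod ν) := by
  have hmeas : Measurable (uncurry fun σ x => fderiv ℝ u (Y σ x) (V σ (Y σ x))) :=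
    isBoundedBilinearMap_apply.continuous.measurable2 ((measurable_fderiv ℝ u).comp hY)
      (hV.comp (measurable_fst.prodMk hY))
  refine ⟨hmeas.aestronglyMeasurable, ?_⟩
  have hpt : ∀ σ x, ‖fderiv ℝ u (Y σ x) (V σ (Y σ x))‖ₑ ≤ L * ⨆ z, (‖V σ z‖₊ : ℝ≥0∞) :=
    fun σ x => by
      grw [← le_iSup (fun z => (‖V σ z‖₊ : ℝ≥0∞)) (Y σ x), ← ENNReal.coe_mul,
        ← hL.nnnorm_fderiv_apply_le (Y σ x)]
      exact le_rfl
  calc ∫⁻ p, ‖uncurry (fun σ x => fderiv ℝ u (Y σ x) (V σ (Y σ x))) p‖ₑ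
        ∂(volume.restrict s).prod ν
      = ∫⁻ σ in s, ∫⁻ x, ‖fderiv ℝ u (Y σ x) (V σ (Y σ x))‖ₑ ∂ν :=
        lintegral_prod _ hmeas.enorm.aemeasurable
    _ ≤ ∫⁻ σ in s, (L * ν univ) * ⨆ z, (‖V σ z‖₊ : ℝ≥0∞) := by
        refine lintegral_mono fun σ => (lintegral_mono (hpt σ)).trans_eq ?_
        rw [lintegral_const]
        ring
    _ = (L * ν univ) * ∫⁻ σ in s, ⨆ z, (‖V σ z‖₊ : ℝ≥0∞) :=
        lintegral_const_mul' _ _ (by finiteness)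
    _ ≤ (L * ν univ) * ∫⁻ σ in Icc 0 T, ⨆ z, (‖V σ z‖₊ : ℝ≥0∞) := by
        gcongr
    _ < ⊤ := ENNReal.mul_lt_top (by finiteness) hbound

theorem integrable_apply_of_abs_le (hY : Measurable (uncurry Y)) {M : ℝ} (hM : ∀ x, |u x| ≤ M)
    (hL : LipschitzWith L u) (c : ℝ) (ν : Measure α) [IsFiniteMeasure ν] :
    Integrable (fun x => u (Y c x)) ν :=
  .of_bound (hL.continuous.measurable.comp hY.of_uncurry_left).aestronglyMeasurable M
    (.of_forall fun _ => hM _)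

theorem integral_sub_integral_eq_integral_fderiv (hV : Measurable (uncurry V))
    (hbound : (∫⁻ t in Icc (0:ℝ) T, ⨆ x, (‖V t x‖₊ : ℝ≥0∞)) < ⊤)
    (hY : Measurable (uncurry Y)) {M : ℝ} (hM : ∀ x, |u x| ≤ M)
    (hL : LipschitzWith L u) {a b : ℝ} (ha : a ∈ Icc 0 T) (hb : b ∈ Icc 0 T)
    (hcurve : ∀ x, u (Y b x) - u (Y a x) = ∫ σ in a..b, fderiv ℝ u (Y σ x) (V σ (Y σ x)))
    (ν : Measure α) [IsFiniteMeasure ν] :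
    ∫ x, u (Y b x) ∂ν - ∫ x, u (Y a x) ∂ν =
      ∫ σ in a..b, ∫ x, fderiv ℝ u (Y σ x) (V σ (Y σ x)) ∂ν := by
  rw [← integral_sub (integrable_apply_of_abs_le hY hM hL b ν)
    (integrable_apply_of_abs_le hY hM hL a ν), intervalIntegral_integral_swap
    (integrable_fderiv_apply_prod hV hbound hY hL
      (uIoc_subset_uIcc.trans (uIcc_subset_Icc ha hb)) ν)]
  exact integral_congr_ae (Eventually.of_forall hcurve)

theorem sInt_map_sub_sInt_map_eq_integral (hV : Measurable (uncurry V))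
    (hbound : (∫⁻ t in Icc (0:ℝ) T, ⨆ x, (‖V t x‖₊ : ℝ≥0∞)) < ⊤)
    {Y : ℝ → EuclideanSpace ℝ (Fin d) → EuclideanSpace ℝ (Fin d)}
    (hY : Measurable (uncurry Y)) {M : ℝ} (hM : ∀ x, |u x| ≤ M) (hL : LipschitzWith L u)
    {a b : ℝ} (ha : a ∈ Icc 0 T) (hb : b ∈ Icc 0 T)
    (hcurve : ∀ x, u (Y b x) - u (Y a x) = ∫ σ in a..b, fderiv ℝ u (Y σ x) (V σ (Y σ x)))
    (μ : SignedMeasure (EuclideanSpace ℝ (Fin d))) :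
    sInt (μ.map (Y b)) u - sInt (μ.map (Y a)) u =
      ∫ σ in a..b, sInt (μ.map (Y σ)) (fun x => fderiv ℝ u x (V σ x)) := by
  have hprod : ∀ (ν : Measure (EuclideanSpace ℝ (Fin d))) [IsFiniteMeasure ν],
      Integrable (uncurry fun σ x => fderiv ℝ u (Y σ x) (V σ (Y σ x)))
        ((volume.restrict (Ι a b)).prod ν) := fun ν _ =>
    integrable_fderiv_apply_prod hV hbound hY hL
      (uIoc_subset_uIcc.trans (uIcc_subset_Icc ha hb)) ν
  have hinner : ∀ (ν : Measure (EuclideanSpace ℝ (Fin d))) [IsFiniteMeasure ν],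
      IntervalIntegrable (fun σ => ∫ x, fderiv ℝ u (Y σ x) (V σ (Y σ x)) ∂ν) volume a b :=
    fun ν _ => intervalIntegrable_iff.2 (hprod ν).integral_prod_left
  have hslice : ∀ᵐ σ, σ ∈ Ι a b → sInt (μ.map (Y σ)) (fun x => fderiv ℝ u x (V σ x)) =
      ∫ x, fderiv ℝ u (Y σ x) (V σ (Y σ x)) ∂μ.toJordanDecomposition.posPart -
        ∫ x, fderiv ℝ u (Y σ x) (V σ (Y σ x)) ∂μ.toJordanDecomposition.negPart := by
    have hpos := (hprod μ.toJordanDecomposition.posPart).prod_right_ae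
    have hneg := (hprod μ.toJordanDecomposition.negPart).prod_right_ae
    rw [ae_restrict_iff' measurableSet_uIoc] at hpos hneg
    filter_upwards [hpos, hneg] with σ hposσ hnegσ hσ
    exact sInt_map μ hY.of_uncurry_left (isBoundedBilinearMap_apply.continuous.measurable2
      (measurable_fderiv ℝ u) hV.of_uncurry_left) (hposσ hσ) (hnegσ hσ)
  have hint := integrable_apply_of_abs_le hY hM hL
  rw [sInt_map μ hY.of_uncurry_left hL.continuous.measurable (hint b _) (hint b _),
    sInt_map μ hY.of_uncurry_left hL.continuous.measurable (hint a _) (hint a _),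
    intervalIntegral.integral_congr_ae hslice,
    intervalIntegral.integral_sub (hinner _) (hinner _),
    ← integral_sub_integral_eq_integral_fderiv hV hbound hY hM hL ha hb hcurve,
    ← integral_sub_integral_eq_integral_fderiv hV hbound hY hM hL ha hb hcurve]
  ring

end Transport

/-- if `X` is a flow of solutions of the ODE, then for each
`S ∈ [0,T]` and each bounded signed Borel measure `μ`, the curve
`μ_t := (X_S^t)_♯ μ` solves the continuity equation: for every `C¹`
bounded Lipschitz `u`, `t ↦ ∫ u dμ_t` is absolutely continuous with
derivative `∫ du_x(V(t,x)) dμ_t(x)` (stated in integral form). -/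
theorem stmt4 (d : ℕ) (T : ℝ) (hT : 0 ≤ T)
    (V : ℝ → EuclideanSpace ℝ (Fin d) → EuclideanSpace ℝ (Fin d))
    (hV : Measurable (Function.uncurry V))
    (hbound : (∫⁻ t in Set.Icc (0:ℝ) T, ⨆ x, (‖V t x‖₊ : ℝ≥0∞)) < ⊤)
    (X : ℝ → ℝ → EuclideanSpace ℝ (Fin d) → EuclideanSpace ℝ (Fin d))
    (hX : IsFlow T hT V X)
    (hXmeas : ∀ s t : ℝ, Measurable (X s t))
    (S : ℝ) (hS : S ∈ Set.Icc (0:ℝ) T)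
    (μ : MeasureTheory.SignedMeasure (EuclideanSpace ℝ (Fin d))) :
    ∀ u : EuclideanSpace ℝ (Fin d) → ℝ,
      ContDiff ℝ 1 u → (∃ M : ℝ, ∀ x, |u x| ≤ M) →
      (∃ L : ℝ≥0, LipschitzWith L u) →
      ∀ t ∈ Set.Icc (0:ℝ) T,
        sInt (μ.map (X S t)) u - sInt (μ.map (X S S)) u =
          ∫ σ in S..t, sInt (μ.map (X S σ))
            (fun x => fderiv ℝ u x (V σ x)) := by
  rintro u hu ⟨M, hM⟩ ⟨L, hL⟩ t ht
  choose γ hγ _ hXγ _ using hX S hS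
  set Y : ℝ → EuclideanSpace ℝ (Fin d) → EuclideanSpace ℝ (Fin d) :=
    fun σ x => γ x (projIcc 0 T hT σ)
  have hYX : ∀ σ, Y σ = X S (projIcc 0 T hT σ) := fun σ => funext fun x => (hXγ x _).symm
  have hXY : ∀ σ ∈ Icc 0 T, X S σ = Y σ := fun σ hσ => by
    rw [hYX, projIcc_of_mem hT hσ]
  have hYmeas : Measurable (uncurry Y) := measurable_uncurry_of_continuous_of_measurable
    (fun x => (γ x).continuous.comp continuous_projIcc) fun σ => hYX σ ▸ hXmeas S _
  rw [hXY t ht, hXY S hS, intervalIntegral.integral_congr fun σ hσ => by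
    rw [hXY σ (uIcc_subset_Icc hS ht hσ)] ]
  exact sInt_map_sub_sInt_map_eq_integral hV hbound hYmeas hM hL hS ht
    (fun x => (hγ x).sub_eq_integral_fderiv hV hbound hL (hu.differentiable one_ne_zero) hS ht) μ
end
end

section
/- Let x(t) and y(t) be two solutions of the ODE γ' = V(t,γ) on [0,T] and S ∈ (0,T) a time with x(S) = y(S). Define μ_t = 0 for t ≤ S and μ_t = δ_{x(t)} − δ_{y(t)} for t ≥ S. Then (μ_t) is a solution of the continuity equation ∂_t μ_t + div(V_t μ_t) = 0 in the class of signed measures. -/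
open MeasureTheory Set Filter
open scoped ENNReal NNReal Topology

noncomputable section

/-- A signed-measure-valued solution of the continuity equation
`∂_t μ_t + div(V_t μ_t) = 0`, in integral (weak) form. -/
def IsSignedSolution {d : ℕ} (T : ℝ)
    (V : ℝ → EuclideanSpace ℝ (Fin d) → EuclideanSpace ℝ (Fin d))
    (μ : ℝ → MeasureTheory.SignedMeasure (EuclideanSpace ℝ (Fin d))) : Prop :=
  ∀ u : EuclideanSpace ℝ (Fin d) → ℝ, ContDiff ℝ (⊤ : ℕ∞) u → HasCompactSupport u →
    ∀ s ∈ Set.Icc (0:ℝ) T, ∀ t ∈ Set.Icc (0:ℝ) T,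
      sInt (μ t) u - sInt (μ s) u =
        ∫ σ in s..t, sInt (μ σ) (fun x => fderiv ℝ u x (V σ x))

lemma sInt_zero {d : ℕ} (f : EuclideanSpace ℝ (Fin d) → ℝ) :
    sInt 0 f = 0 := by
  simp [sInt, SignedMeasure.toJordanDecomposition_zero]

lemma sInt_dirac_sub {d : ℕ} (a b : EuclideanSpace ℝ (Fin d))
    (f : EuclideanSpace ℝ (Fin d) → ℝ) :
    sInt ((Measure.dirac a).toSignedMeasure - (Measure.dirac b).toSignedMeasure) f
      = f a - f b := by
  rcases eq_or_ne a b with rfl | hab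
  · simp [sInt, SignedMeasure.toJordanDecomposition_zero]
  · have hms : Measure.dirac a ⟂ₘ Measure.dirac b := by
      refine ⟨{a}ᶜ, (measurableSet_singleton a).compl, by simp, ?_⟩
      · simp [Measure.dirac_apply' _ (measurableSet_singleton a), hab.symm]
    set j : JordanDecomposition (EuclideanSpace ℝ (Fin d)) :=
      ⟨Measure.dirac a, Measure.dirac b, hms⟩ with hj
    have hjs : j.toSignedMeasure
        = (Measure.dirac a).toSignedMeasure - (Measure.dirac b).toSignedMeasure := rfl
    have : ((Measure.dirac a).toSignedMeasure - (Measure.dirac b).toSignedMeasure).toJordanDecomposition = j := by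
      rw [← hjs, JordanDecomposition.toJordanDecomposition_toSignedMeasure]
    rw [sInt, this]
    simp [hj, MeasureTheory.integral_dirac]

lemma keyFTC {d : ℕ} {f : ℝ → EuclideanSpace ℝ (Fin d)} (hf : Integrable f)
    {u : EuclideanSpace ℝ (Fin d) → ℝ} (hu : ContDiff ℝ (⊤ : ℕ∞) u) (hcu : HasCompactSupport u)
    {F : ℝ → EuclideanSpace ℝ (Fin d)} {c : EuclideanSpace ℝ (Fin d)}
    (hFdef : ∀ τ, F τ = c + ∫ σ in (0:ℝ)..τ, f σ) (s t : ℝ) :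
    u (F t) - u (F s) = ∫ σ in s..t, fderiv ℝ u (F σ) (f σ) := by
  obtain ⟨C, hC⟩ := (hcu.fderiv (𝕜 := ℝ)).exists_bound_of_continuous
    (hu.continuous_fderiv (by simp))
  have hC0 : 0 ≤ C := le_trans (norm_nonneg _) (hC c)
  choose g hg1 hg2 hg3 hg4 using fun n : ℕ =>
    hf.exists_hasCompactSupport_integral_sub_le
      (show (0:ℝ) < 1/(n+1) by positivity)
  set Fn : ℕ → ℝ → EuclideanSpace ℝ (Fin d) :=
    fun n τ => c + ∫ σ in (0:ℝ)..τ, g n σ with hFn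
  -- pointwise estimate
  have hptwise : ∀ (τ : ℝ) (n : ℕ), ‖Fn n τ - F τ‖ ≤ 1/(n+1) := by
    intro τ n
    have h1 : Fn n τ - F τ = ∫ σ in (0:ℝ)..τ, (g n σ - f σ) := by
      rw [hFn, hFdef,
        intervalIntegral.integral_sub (hg4 n).intervalIntegrable hf.intervalIntegrable]
      simp
    rw [h1]
    calc ‖∫ σ in (0:ℝ)..τ, (g n σ - f σ)‖
        ≤ ∫ σ in Set.uIoc (0:ℝ) τ, ‖g n σ - f σ‖ :=
          intervalIntegral.norm_integral_le_integral_norm_uIoc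
      _ ≤ ∫ σ, ‖g n σ - f σ‖ :=
          setIntegral_le_integral ((hg4 n).sub hf).norm
            (ae_of_all _ fun σ => norm_nonneg _)
      _ = ∫ σ, ‖f σ - g n σ‖ := by simp_rw [norm_sub_rev]
      _ ≤ 1/(n+1) := hg2 n
  have htends : ∀ τ : ℝ, Tendsto (fun n => Fn n τ) atTop (𝓝 (F τ)) := by
    intro τ
    rw [tendsto_iff_norm_sub_tendsto_zero]
    exact squeeze_zero (fun n => norm_nonneg _) (hptwise τ)
      tendsto_one_div_add_atTop_nhds_zero_nat
  have hFncont : ∀ n, Continuous (Fn n) :=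
    fun n => continuous_const.add ((hg4 n).continuous_primitive 0)
  have hFcont : Continuous F := by
    have : Continuous fun τ => c + ∫ σ in (0:ℝ)..τ, f σ :=
      continuous_const.add (hf.continuous_primitive 0)
    exact this.congr fun τ => (hFdef τ).symm
  have hchain : ∀ n (σ : ℝ),
      HasDerivAt (fun τ => u (Fn n τ)) (fderiv ℝ u (Fn n σ) (g n σ)) σ := by
    intro n σ
    have hd : HasDerivAt (Fn n) (g n σ) σ := by
      exact (intervalIntegral.integral_hasDerivAt_right
        (hg4 n).intervalIntegrable
        ((hg3 n).stronglyMeasurableAtFilter _ _)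
        (hg3 n).continuousAt).const_add c
    exact (((hu.differentiable (by simp)) (Fn n σ)).hasFDerivAt).comp_hasDerivAt σ hd
  have hcontInt : ∀ n, Continuous fun σ => fderiv ℝ u (Fn n σ) (g n σ) :=
    fun n => ((hu.continuous_fderiv (by simp)).comp (hFncont n)).clm_apply (hg3 n)
  have heqn : ∀ n, u (Fn n t) - u (Fn n s)
      = ∫ σ in s..t, fderiv ℝ u (Fn n σ) (g n σ) := fun n =>
    (intervalIntegral.integral_eq_sub_of_hasDerivAt (fun σ _ => hchain n σ)
      ((hcontInt n).intervalIntegrable s t)).symm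
  -- measurability helper
  have hAESM : ∀ (w : ℝ → EuclideanSpace ℝ (Fin d)), Continuous w →
      ∀ (h : ℝ → EuclideanSpace ℝ (Fin d)), AEStronglyMeasurable h volume →
      ∀ (ν : Measure ℝ), ν ≪ volume →
      AEStronglyMeasurable (fun σ => fderiv ℝ u (w σ) (h σ)) ν := by
    intro w hw h hh ν hν
    exact isBoundedBilinearMap_apply.continuous.comp_aestronglyMeasurable
      ((((hu.continuous_fderiv (by simp)).comp hw).aestronglyMeasurable.mono_ac hν).prodMk
        (hh.mono_ac hν))
  have hIntAux : ∀ (w : ℝ → EuclideanSpace ℝ (Fin d)), Continuous w →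
      ∀ (h : ℝ → EuclideanSpace ℝ (Fin d)), Integrable h volume →
      Integrable (fun σ => fderiv ℝ u (w σ) (h σ)) volume := by
    intro w hw h hh
    refine Integrable.mono' (hh.norm.const_mul C)
      (hAESM w hw h hh.1 volume (Measure.AbsolutelyContinuous.refl _))
      (ae_of_all _ fun σ => ?_)
    calc ‖fderiv ℝ u (w σ) (h σ)‖ ≤ ‖fderiv ℝ u (w σ)‖ * ‖h σ‖ :=
          (fderiv ℝ u (w σ)).le_opNorm _
      _ ≤ C * ‖h σ‖ := mul_le_mul_of_nonneg_right (hC _) (norm_nonneg _)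
  have hIntF : Integrable (fun σ => fderiv ℝ u (F σ) (f σ)) volume :=
    hIntAux F hFcont f hf
  have hIntFn : ∀ n, Integrable (fun σ => fderiv ℝ u (Fn n σ) (f σ)) volume :=
    fun n => hIntAux (Fn n) (hFncont n) f hf
  have hIntDiff : ∀ n,
      Integrable (fun σ => fderiv ℝ u (Fn n σ) (g n σ - f σ)) volume :=
    fun n => hIntAux (Fn n) (hFncont n) _ ((hg4 n).sub hf)
  -- split the approximated integral
  have hsplit : ∀ n, (∫ σ in s..t, fderiv ℝ u (Fn n σ) (g n σ))
      = (∫ σ in s..t, fderiv ℝ u (Fn n σ) (g n σ - f σ))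
        + ∫ σ in s..t, fderiv ℝ u (Fn n σ) (f σ) := by
    intro n
    rw [← intervalIntegral.integral_add (hIntDiff n).intervalIntegrable
      (hIntFn n).intervalIntegrable]
    congr 1
    funext σ
    simp [map_sub]
  -- first term tends to 0
  have hterm1 : Tendsto
      (fun n => ∫ σ in s..t, fderiv ℝ u (Fn n σ) (g n σ - f σ)) atTop (𝓝 0) := by
    have hbnd : ∀ n : ℕ, ‖∫ σ in s..t, fderiv ℝ u (Fn n σ) (g n σ - f σ)‖
        ≤ C * (1/(n+1)) := by
      intro n
      calc ‖∫ σ in s..t, fderiv ℝ u (Fn n σ) (g n σ - f σ)‖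
          ≤ ∫ σ in Set.uIoc s t, ‖fderiv ℝ u (Fn n σ) (g n σ - f σ)‖ :=
            intervalIntegral.norm_integral_le_integral_norm_uIoc
        _ ≤ ∫ σ in Set.uIoc s t, C * ‖f σ - g n σ‖ := by
            refine integral_mono (hIntDiff n).norm.integrableOn
              (((hf.sub (hg4 n)).norm.const_mul C).integrableOn) (fun σ => ?_)
            calc ‖fderiv ℝ u (Fn n σ) (g n σ - f σ)‖
                ≤ ‖fderiv ℝ u (Fn n σ)‖ * ‖g n σ - f σ‖ :=
                  (fderiv ℝ u (Fn n σ)).le_opNorm _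
              _ ≤ C * ‖g n σ - f σ‖ :=
                  mul_le_mul_of_nonneg_right (hC _) (norm_nonneg _)
              _ = C * ‖f σ - g n σ‖ := by rw [norm_sub_rev]
        _ = C * ∫ σ in Set.uIoc s t, ‖f σ - g n σ‖ := integral_const_mul C _
        _ ≤ C * ∫ σ, ‖f σ - g n σ‖ := by
            refine mul_le_mul_of_nonneg_left ?_ hC0
            exact setIntegral_le_integral (hf.sub (hg4 n)).norm
              (ae_of_all _ fun σ => norm_nonneg _)
        _ ≤ C * (1/(n+1)) := mul_le_mul_of_nonneg_left (hg2 n) hC0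
    have hlim : Tendsto (fun n : ℕ => C * (1/(n+1))) atTop (𝓝 0) := by
      have := tendsto_one_div_add_atTop_nhds_zero_nat.const_mul C
      simpa [mul_comm] using this
    exact squeeze_zero_norm hbnd hlim
  -- second term tends to the target
  have hterm2 : Tendsto (fun n => ∫ σ in s..t, fderiv ℝ u (Fn n σ) (f σ)) atTop
      (𝓝 (∫ σ in s..t, fderiv ℝ u (F σ) (f σ))) := by
    apply intervalIntegral.tendsto_integral_filter_of_dominated_convergence
      (fun σ => C * ‖f σ‖)
    · exact Eventually.of_forall fun n =>
        hAESM (Fn n) (hFncont n) f hf.1 _ Measure.restrict_le_self.absolutelyContinuous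
    · refine Eventually.of_forall fun n => ae_of_all _ fun σ _ => ?_
      calc ‖fderiv ℝ u (Fn n σ) (f σ)‖ ≤ ‖fderiv ℝ u (Fn n σ)‖ * ‖f σ‖ :=
            (fderiv ℝ u (Fn n σ)).le_opNorm _
        _ ≤ C * ‖f σ‖ := mul_le_mul_of_nonneg_right (hC _) (norm_nonneg _)
    · exact (hf.norm.const_mul C).intervalIntegrable
    · refine ae_of_all _ fun σ _ => ?_
      have h1 : Tendsto (fun n => fderiv ℝ u (Fn n σ)) atTop
          (𝓝 (fderiv ℝ u (F σ))) :=
        ((hu.continuous_fderiv (by simp)).tendsto (F σ)).comp (htends σ)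
      exact (((ContinuousLinearMap.apply ℝ ℝ (f σ)).continuous.tendsto _).comp h1 :)
  -- conclude
  have hL : Tendsto (fun n => u (Fn n t) - u (Fn n s)) atTop
      (𝓝 (u (F t) - u (F s))) :=
    ((hu.continuous.tendsto _).comp (htends t)).sub
      ((hu.continuous.tendsto _).comp (htends s))
  have hR : Tendsto (fun n => u (Fn n t) - u (Fn n s)) atTop
      (𝓝 (∫ σ in s..t, fderiv ℝ u (F σ) (f σ))) := by
    have : Tendsto (fun n => ∫ σ in s..t, fderiv ℝ u (Fn n σ) (g n σ)) atTop
        (𝓝 (0 + ∫ σ in s..t, fderiv ℝ u (F σ) (f σ))) := by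
      simp_rw [hsplit]
      exact hterm1.add hterm2
    rw [zero_add] at this
    simpa only [← heqn] using this
  exact tendsto_nhds_unique hL hR

lemma integrableOn_field {d : ℕ} {T : ℝ} (hT : 0 ≤ T)
    {V : ℝ → EuclideanSpace ℝ (Fin d) → EuclideanSpace ℝ (Fin d)}
    (hV : Measurable (Function.uncurry V))
    (hbound : (∫⁻ t in Set.Icc (0:ℝ) T, ⨆ x, (‖V t x‖₊ : ℝ≥0∞)) < ⊤)
    (γ : C(Set.Icc (0:ℝ) T, EuclideanSpace ℝ (Fin d))) :
    IntegrableOn (fun σ => V σ (γ (Set.projIcc 0 T hT σ))) (Set.Icc (0:ℝ) T) := by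
  have hm : Measurable fun σ => V σ (γ (Set.projIcc 0 T hT σ)) :=
    hV.comp (measurable_id.prodMk
      ((γ.continuous.comp continuous_projIcc).measurable))
  refine ⟨hm.aestronglyMeasurable, ?_⟩
  refine lt_of_le_of_lt (lintegral_mono fun σ => ?_) hbound
  exact le_iSup (fun z => (‖V σ z‖₊ : ℝ≥0∞)) (γ (Set.projIcc 0 T hT σ))

lemma integrableOn_fderiv_apply {d : ℕ} {u : EuclideanSpace ℝ (Fin d) → ℝ}
    (hu : ContDiff ℝ (⊤ : ℕ∞) u) {C : ℝ}
    (hC : ∀ z, ‖fderiv ℝ u z‖ ≤ C)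
    {w : ℝ → EuclideanSpace ℝ (Fin d)} (hw : Continuous w)
    {h : ℝ → EuclideanSpace ℝ (Fin d)} {A : Set ℝ}
    (hh : IntegrableOn h A) :
    IntegrableOn (fun σ => fderiv ℝ u (w σ) (h σ)) A := by
  have haesm : AEStronglyMeasurable (fun σ => fderiv ℝ u (w σ) (h σ))
      (volume.restrict A) :=
    isBoundedBilinearMap_apply.continuous.comp_aestronglyMeasurable
      ((((hu.continuous_fderiv (by simp)).comp hw).aestronglyMeasurable).prodMk hh.1)
  refine Integrable.mono' (hh.norm.const_mul C) haesm (ae_of_all _ fun σ => ?_)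
  calc ‖fderiv ℝ u (w σ) (h σ)‖ ≤ ‖fderiv ℝ u (w σ)‖ * ‖h σ‖ :=
        (fderiv ℝ u (w σ)).le_opNorm _
    _ ≤ C * ‖h σ‖ := mul_le_mul_of_nonneg_right (hC _) (norm_nonneg _)

/-- if `x(t)`, `y(t)` are two ODE solutions with `x(S) = y(S)`
for some `S ∈ (0,T)`, then `μ_t = 0` for `t ≤ S` and
`μ_t = δ_{x(t)} − δ_{y(t)}` for `t ≥ S` defines a signed-measure solution
of the continuity equation. -/
theorem stmt6 (d : ℕ) (T : ℝ) (hT : 0 ≤ T)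
    (V : ℝ → EuclideanSpace ℝ (Fin d) → EuclideanSpace ℝ (Fin d))
    (hV : Measurable (Function.uncurry V))
    (hbound : (∫⁻ t in Set.Icc (0:ℝ) T, ⨆ x, (‖V t x‖₊ : ℝ≥0∞)) < ⊤)
    (x y : C(Set.Icc (0:ℝ) T, EuclideanSpace ℝ (Fin d)))
    (hx : IsSolution T hT V x) (hy : IsSolution T hT V y)
    (S : ℝ) (hS : S ∈ Set.Ioo (0:ℝ) T)
    (hxy : x ⟨S, Set.mem_Icc_of_Ioo hS⟩ = y ⟨S, Set.mem_Icc_of_Ioo hS⟩) :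
    IsSignedSolution T V (fun t =>
      if t ≤ S then 0
      else (Measure.dirac (x (Set.projIcc 0 T hT t))).toSignedMeasure -
        (Measure.dirac (y (Set.projIcc 0 T hT t))).toSignedMeasure) := by
  intro u hu hcu s hs t ht
  obtain ⟨C, hC⟩ := (hcu.fderiv (𝕜 := ℝ)).exists_bound_of_continuous
    (hu.continuous_fderiv (by simp))
  set π : ℝ → Set.Icc (0:ℝ) T := Set.projIcc 0 T hT with hπdef
  have hπ : ∀ τ (hτ : τ ∈ Set.Icc (0:ℝ) T), π τ = ⟨τ, hτ⟩ :=
    fun τ hτ => Set.projIcc_of_mem hT hτ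
  -- integrability of the velocity along the curves
  have hIX : IntegrableOn (fun σ => V σ (x (π σ))) (Set.Icc (0:ℝ) T) :=
    integrableOn_field hT hV hbound x
  have hIY : IntegrableOn (fun σ => V σ (y (π σ))) (Set.Icc (0:ℝ) T) :=
    integrableOn_field hT hV hbound y
  have hsub : ∀ a ∈ Set.Icc (0:ℝ) T, ∀ b ∈ Set.Icc (0:ℝ) T,
      Set.uIcc a b ⊆ Set.Icc (0:ℝ) T := by
    intro a ha b hb
    rw [← Set.uIcc_of_le hT]
    exact Set.uIcc_subset_uIcc (by rwa [Set.uIcc_of_le hT]) (by rwa [Set.uIcc_of_le hT])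
  -- chain rule along a curve
  have hchain : ∀ (γ : C(Set.Icc (0:ℝ) T, EuclideanSpace ℝ (Fin d))),
      IsSolution T hT V γ →
      ∀ a ∈ Set.Icc (0:ℝ) T, ∀ b ∈ Set.Icc (0:ℝ) T,
      u (γ (π b)) - u (γ (π a))
        = ∫ σ in a..b, fderiv ℝ u (γ (π σ)) (V σ (γ (π σ))) := by
    intro γ hγ a ha b hb
    have hIG : IntegrableOn (fun σ => V σ (γ (π σ))) (Set.Icc (0:ℝ) T) :=
      integrableOn_field hT hV hbound γ
    set g : ℝ → EuclideanSpace ℝ (Fin d) :=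
      (Set.Icc (0:ℝ) T).indicator (fun σ => V σ (γ (π σ))) with hgdef
    have hg : Integrable g := by
      rw [hgdef]
      exact hIG.integrable_indicator measurableSet_Icc
    set F : ℝ → EuclideanSpace ℝ (Fin d) :=
      fun τ => γ ⟨0, Set.left_mem_Icc.mpr hT⟩ + ∫ σ in (0:ℝ)..τ, g σ with hFdef
    have hFeq : ∀ τ (hτ : τ ∈ Set.Icc (0:ℝ) T), F τ = γ (π τ) := by
      intro τ hτ
      have h1 : (∫ σ in (0:ℝ)..τ, g σ) = ∫ σ in (0:ℝ)..τ, V σ (γ (π σ)) := by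
        refine intervalIntegral.integral_congr fun σ hσ => ?_
        exact Set.indicator_of_mem (hsub 0 (Set.left_mem_Icc.mpr hT) τ hτ hσ) _
      have h2 := hγ (π τ)
      rw [hπ τ hτ] at h2
      rw [hFdef]
      simp only [h1]
      rw [hπ τ hτ]
      have h2' : γ ⟨τ, hτ⟩ - γ ⟨0, Set.left_mem_Icc.mpr hT⟩
          = ∫ σ in (0:ℝ)..τ, V σ (γ (π σ)) := h2
      rw [← h2']
      abel
    have hkey := keyFTC hg hu hcu (F := F) (c := γ ⟨0, Set.left_mem_Icc.mpr hT⟩)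
      (fun τ => rfl) a b
    rw [hFeq a ha, hFeq b hb] at hkey
    rw [hkey]
    refine intervalIntegral.integral_congr fun σ hσ => ?_
    have hσT := hsub a ha b hb hσ
    rw [hFeq σ hσT, hgdef, Set.indicator_of_mem hσT]
  -- interval integrability of the integrands
  have hiX : IntegrableOn (fun σ => fderiv ℝ u (x (π σ)) (V σ (x (π σ))))
      (Set.Icc (0:ℝ) T) :=
    integrableOn_fderiv_apply hu hC (x.continuous.comp continuous_projIcc) hIX
  have hiY : IntegrableOn (fun σ => fderiv ℝ u (y (π σ)) (V σ (y (π σ))))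
      (Set.Icc (0:ℝ) T) :=
    integrableOn_fderiv_apply hu hC (y.continuous.comp continuous_projIcc) hIY
  set ψ : ℝ → ℝ := fun σ =>
    fderiv ℝ u (x (π σ)) (V σ (x (π σ))) - fderiv ℝ u (y (π σ)) (V σ (y (π σ)))
    with hψdef
  have hiψ : IntegrableOn ψ (Set.Icc (0:ℝ) T) := hiX.sub hiY
  set hh : ℝ → ℝ := fun σ => if σ ≤ S then 0 else ψ σ with hhdef
  have hhind : hh = (Set.Ioi S).indicator ψ := by
    funext σ
    simp only [hhdef]
    by_cases h : σ ≤ S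
    · rw [if_pos h, Set.indicator_of_notMem (by simpa using h)]
    · rw [if_neg h, Set.indicator_of_mem (by simpa using not_le.mp h)]
  have hihh : IntegrableOn hh (Set.Icc (0:ℝ) T) := by
    rw [hhind]; exact hiψ.indicator measurableSet_Ioi
  have hiihh : ∀ a ∈ Set.Icc (0:ℝ) T, ∀ b ∈ Set.Icc (0:ℝ) T,
      IntervalIntegrable hh volume a b := fun a ha b hb =>
    (hihh.mono_set (hsub a ha b hb)).intervalIntegrable
  -- subtracted chain rule
  have hAB : ∀ a ∈ Set.Icc (0:ℝ) T, ∀ b ∈ Set.Icc (0:ℝ) T,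
      (u (x (π b)) - u (y (π b))) - (u (x (π a)) - u (y (π a)))
        = ∫ σ in a..b, ψ σ := by
    intro a ha b hb
    have h1 := hchain x hx a ha b hb
    have h2 := hchain y hy a ha b hb
    simp only [hψdef]
    rw [intervalIntegral.integral_sub
      ((hiX.mono_set (hsub a ha b hb)).intervalIntegrable)
      ((hiY.mono_set (hsub a ha b hb)).intervalIntegrable), ← h1, ← h2]
    ring
  have hSmem : S ∈ Set.Icc (0:ℝ) T := Set.mem_Icc_of_Ioo hS
  have hAS : u (x (π S)) - u (y (π S)) = 0 := by
    rw [hπ S hSmem, hxy, sub_self]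
  -- rewrite the goal
  have hsIntu : ∀ r : ℝ, sInt (if r ≤ S then 0
      else (Measure.dirac (x (π r))).toSignedMeasure -
        (Measure.dirac (y (π r))).toSignedMeasure) u
      = if r ≤ S then 0 else u (x (π r)) - u (y (π r)) := by
    intro r
    split_ifs
    · exact sInt_zero u
    · exact sInt_dirac_sub _ _ u
  have hsIntv : ∀ σ : ℝ, sInt (if σ ≤ S then 0
      else (Measure.dirac (x (π σ))).toSignedMeasure -
        (Measure.dirac (y (π σ))).toSignedMeasure)
        (fun z => fderiv ℝ u z (V σ z)) = hh σ := by
    intro σ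
    simp only [hhdef]
    split_ifs
    · exact sInt_zero _
    · exact sInt_dirac_sub _ _ _
  simp only [hsIntu, hsIntv]
  -- the main case analysis, for a ≤ b
  have main : ∀ a ∈ Set.Icc (0:ℝ) T, ∀ b ∈ Set.Icc (0:ℝ) T, a ≤ b →
      ((if b ≤ S then 0 else u (x (π b)) - u (y (π b)))
        - (if a ≤ S then 0 else u (x (π a)) - u (y (π a)))
        = ∫ σ in a..b, hh σ) := by
    intro a ha b hb hab
    by_cases hbS : b ≤ S
    · have haS : a ≤ S := le_trans hab hbS
      rw [if_pos hbS, if_pos haS]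
      have : EqOn hh (fun _ => (0:ℝ)) (Set.uIcc a b) := by
        intro σ hσ
        rw [Set.uIcc_of_le hab] at hσ
        simp only [hhdef]
        exact if_pos (le_trans hσ.2 hbS)
      rw [intervalIntegral.integral_congr this, intervalIntegral.integral_zero]
      ring
    · by_cases haS : a ≤ S
      · -- a ≤ S < b
        have hSb : S ≤ b := le_of_lt (not_le.mp hbS)
        rw [if_neg hbS, if_pos haS]
        rw [← intervalIntegral.integral_add_adjacent_intervals
          (hiihh a ha S hSmem) (hiihh S hSmem b hb)]
        have e1 : (∫ σ in a..S, hh σ) = 0 := by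
          have : EqOn hh (fun _ => (0:ℝ)) (Set.uIcc a S) := by
            intro σ hσ
            rw [Set.uIcc_of_le haS] at hσ
            simp only [hhdef]
            exact if_pos hσ.2
          rw [intervalIntegral.integral_congr this, intervalIntegral.integral_zero]
        have e2 : (∫ σ in S..b, hh σ) = ∫ σ in S..b, ψ σ := by
          refine intervalIntegral.integral_congr_ae
            (Eventually.of_forall fun σ hσ => ?_)
          rw [Set.uIoc_of_le hSb] at hσ
          simp only [hhdef]
          exact if_neg (not_le.mpr hσ.1)
        rw [e1, e2, ← hAB S hSmem b hb, hAS]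
        ring
      · -- S < a
        have haS' : S < a := not_le.mp haS
        rw [if_neg hbS, if_neg haS]
        have e2 : (∫ σ in a..b, hh σ) = ∫ σ in a..b, ψ σ := by
          refine intervalIntegral.integral_congr_ae
            (Eventually.of_forall fun σ hσ => ?_)
          rw [Set.uIoc_of_le hab] at hσ
          simp only [hhdef]
          exact if_neg (not_le.mpr (lt_of_lt_of_le haS' (le_of_lt hσ.1)))
        rw [e2, ← hAB a ha b hb]
  rcases le_total s t with hst | hts
  · exact main s hs t ht hst
  · have h1 := main t ht s hs hts
    have h2 : (∫ σ in s..t, hh σ) = -∫ σ in t..s, hh σ :=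
      intervalIntegral.integral_symm t s
    rw [h2, ← h1]
    ring
end
end

section
/- Given a Borel vector field V on [0,T] × ℝ^d with ∫₀ᵀ ‖V_t‖_∞ dt < ∞, the set of all solutions of the continuity equation taking values in the unit ball ℬ of signed measures is equicontinuous as a subset of C([0,T], (ℬ, d)). -/
open MeasureTheory Set
open scoped ENNReal NNReal Topology

noncomputable section

/-- The weak-* distance on the unit ball of signed measures associated to a
sequence `u` of test functions. -/
def wDist {d : ℕ} (u : ℕ → EuclideanSpace ℝ (Fin d) → ℝ)
    (μ η : MeasureTheory.SignedMeasure (EuclideanSpace ℝ (Fin d))) : ℝ :=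
  ∑' n : ℕ, |sInt μ (u n) - sInt η (u n)| / 2 ^ n

lemma wDist_comm {d : ℕ} (u : ℕ → EuclideanSpace ℝ (Fin d) → ℝ)
    (μ η : MeasureTheory.SignedMeasure (EuclideanSpace ℝ (Fin d))) :
    wDist u μ η = wDist u η μ := by
  unfold wDist
  exact tsum_congr fun n => by rw [abs_sub_comm]

lemma sInt_abs_le {d : ℕ} (μ : MeasureTheory.SignedMeasure (EuclideanSpace ℝ (Fin d)))
    (hμ : μ.totalVariation Set.univ ≤ 1)
    (f : EuclideanSpace ℝ (Fin d) → ℝ) {C : ℝ} (hC : 0 ≤ C)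
    (hf : ∀ x, ‖f x‖ ≤ C) : |sInt μ f| ≤ C := by
  set p := μ.toJordanDecomposition.posPart
  set q := μ.toJordanDecomposition.negPart
  have h1 : ‖∫ x, f x ∂p‖ ≤ C * (p Set.univ).toReal :=
    norm_integral_le_of_norm_le_const (Filter.Eventually.of_forall hf)
  have h2 : ‖∫ x, f x ∂q‖ ≤ C * (q Set.univ).toReal :=
    norm_integral_le_of_norm_le_const (Filter.Eventually.of_forall hf)
  have hsum : (p Set.univ).toReal + (q Set.univ).toReal ≤ 1 := by
    have h : p Set.univ + q Set.univ ≤ 1 := by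
      have : μ.totalVariation Set.univ = p Set.univ + q Set.univ := by
        simp [MeasureTheory.SignedMeasure.totalVariation, p, q]
      rw [this] at hμ; exact hμ
    have hp : p Set.univ ≠ ∞ := measure_ne_top _ _
    have hq : q Set.univ ≠ ∞ := measure_ne_top _ _
    calc (p Set.univ).toReal + (q Set.univ).toReal
        = (p Set.univ + q Set.univ).toReal := (ENNReal.toReal_add hp hq).symm
      _ ≤ (1 : ℝ≥0∞).toReal := ENNReal.toReal_mono (by norm_num) h
      _ = 1 := by simp
  calc |sInt μ f| ≤ ‖∫ x, f x ∂p‖ + ‖∫ x, f x ∂q‖ := abs_sub _ _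
    _ ≤ C * (p Set.univ).toReal + C * (q Set.univ).toReal := add_le_add h1 h2
    _ = C * ((p Set.univ).toReal + (q Set.univ).toReal) := by ring
    _ ≤ C * 1 := by nlinarith
    _ = C := mul_one C

/-- for a Borel vector field with `∫₀ᵀ‖V_t‖_∞ dt < ∞`, the set
of solutions of the continuity equation with values in the unit ball `ℬ` of
signed measures is equicontinuous for the weak-* distance. -/
theorem stmt8 (d : ℕ) (T : ℝ) (hT : 0 ≤ T)
    (V : ℝ → EuclideanSpace ℝ (Fin d) → EuclideanSpace ℝ (Fin d))
    (hV : Measurable (Function.uncurry V))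
    (hbdd : ∀ σ : ℝ, BddAbove (Set.range fun x => ‖V σ x‖))
    (hint : IntegrableOn (fun σ => ⨆ x, ‖V σ x‖) (Set.Icc (0:ℝ) T))
    (u : ℕ → EuclideanSpace ℝ (Fin d) → ℝ)
    (hu_smooth : ∀ n, ContDiff ℝ (⊤ : ℕ∞) (u n))
    (hu_supp : ∀ n, HasCompactSupport (u n))
    (hu_norm : ∀ n x, ‖u n x‖ ≤ 1)
    (hu_deriv : ∀ n x, ‖fderiv ℝ (u n) x‖ ≤ 1) :
    ∀ ε > (0:ℝ), ∃ δ > (0:ℝ),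
      ∀ μ : ℝ → MeasureTheory.SignedMeasure (EuclideanSpace ℝ (Fin d)),
        (∀ t, (μ t).totalVariation Set.univ ≤ 1) →
        IsSignedSolution T V μ →
        ∀ s ∈ Set.Icc (0:ℝ) T, ∀ t ∈ Set.Icc (0:ℝ) T,
          |t - s| < δ → wDist u (μ s) (μ t) < ε := by
  intro ε hε
  set g : ℝ → ℝ := fun σ => ⨆ x, ‖V σ x‖ with hgdef
  have hg0 : ∀ σ, 0 ≤ g σ := fun σ => Real.iSup_nonneg fun x => norm_nonneg _
  have hgx : ∀ σ x, ‖V σ x‖ ≤ g σ := fun σ x => le_ciSup (hbdd σ) x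
  set μ0 : Measure ℝ := volume.restrict (Set.Icc (0:ℝ) T) with hμ0
  have hfin : ∫⁻ σ, ‖g σ‖₊ ∂μ0 ≠ ∞ := hint.2.ne
  obtain ⟨δ', hδ'pos, hδ'⟩ := exists_pos_setLIntegral_lt_of_measure_lt hfin
    (ε := ENNReal.ofReal (ε/2)) (by simp [ENNReal.ofReal_eq_zero]; linarith)
  set δ : ℝ := (min 1 δ').toReal with hδdef
  have hδne : min 1 δ' ≠ ∞ := by
    simp [lt_top_iff_ne_top.mp (lt_of_le_of_lt (min_le_left _ _) ENNReal.one_lt_top)]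
  have hδpos : 0 < δ := by
    exact ENNReal.toReal_pos (lt_min one_pos hδ'pos).ne' hδne
  refine ⟨δ, hδpos, ?_⟩
  intro μ hTV hsol
  -- main estimate for ordered times
  have key : ∀ s ∈ Set.Icc (0:ℝ) T, ∀ t ∈ Set.Icc (0:ℝ) T, s ≤ t → t - s < δ →
      wDist u (μ s) (μ t) < ε := by
    intro s hs t ht hst hlt
    have hsub : Set.Ioc s t ⊆ Set.Icc (0:ℝ) T := fun x hx =>
      ⟨le_trans hs.1 hx.1.le, le_trans hx.2 ht.2⟩
    set ν : Measure ℝ := volume.restrict (Set.Ioc s t) with hν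
    have hνeq : μ0.restrict (Set.Ioc s t) = ν := by
      rw [hμ0, Measure.restrict_restrict measurableSet_Ioc, Set.inter_eq_left.mpr hsub]
    have hmeas : μ0 (Set.Ioc s t) < δ' := by
      have h1 : μ0 (Set.Ioc s t) ≤ volume (Set.Ioc s t) := Measure.restrict_le_self _
      have h2 : volume (Set.Ioc s t) = ENNReal.ofReal (t - s) := by
        simp [Real.volume_Ioc]
      have h3 : ENNReal.ofReal (t - s) < min 1 δ' := by
        rw [← ENNReal.ofReal_toReal hδne]
        exact (ENNReal.ofReal_lt_ofReal_iff hδpos).mpr hlt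
      calc μ0 (Set.Ioc s t) ≤ volume (Set.Ioc s t) := h1
        _ < min 1 δ' := by rw [h2]; exact h3
        _ ≤ δ' := min_le_right _ _
    have hlint : ∫⁻ σ in Set.Ioc s t, ‖g σ‖₊ ∂μ0 < ENNReal.ofReal (ε/2) := hδ' _ hmeas
    have hgint : Integrable g ν := hint.mono_set hsub
    set c : ℝ := ∫ σ, g σ ∂ν with hc
    have hclt : c < ε / 2 := by
      calc c ≤ ‖∫ σ, g σ ∂ν‖ := le_abs_self _
        _ ≤ (∫⁻ σ, ‖g σ‖₊ ∂ν).toReal := by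
          have h := norm_integral_le_lintegral_norm (μ := ν) g
          rw [show (∫⁻ a, ENNReal.ofReal ‖g a‖ ∂ν) = ∫⁻ a, (‖g a‖₊ : ℝ≥0∞) ∂ν from
            lintegral_congr fun a => ofReal_norm _] at h
          exact h
        _ < ε / 2 := by
          rw [← hνeq]
          refine lt_of_lt_of_le (ENNReal.toReal_lt_toReal ?_ ENNReal.ofReal_ne_top |>.mpr hlint) ?_
          · rw [hνeq]; exact hgint.2.ne
          · rw [ENNReal.toReal_ofReal (by linarith)]
    -- per-test-function bound
    have hΔ : ∀ n, |sInt (μ s) (u n) - sInt (μ t) (u n)| ≤ c := by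
      intro n
      have heq := hsol (u n) (hu_smooth n) (hu_supp n) s hs t ht
      have hF : ∀ σ, ‖sInt (μ σ) (fun x => fderiv ℝ (u n) x (V σ x))‖ ≤ g σ := by
        intro σ
        rw [Real.norm_eq_abs]
        refine sInt_abs_le (μ σ) (hTV σ) _ (hg0 σ) fun x => ?_
        calc ‖fderiv ℝ (u n) x (V σ x)‖ ≤ ‖fderiv ℝ (u n) x‖ * ‖V σ x‖ :=
              (fderiv ℝ (u n) x).le_opNorm _
          _ ≤ 1 * g σ := mul_le_mul (hu_deriv n x) (hgx σ x) (norm_nonneg _) one_pos.le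
          _ = g σ := one_mul _
      have hIoc : (∫ σ in s..t, sInt (μ σ) (fun x => fderiv ℝ (u n) x (V σ x)))
          = ∫ σ, sInt (μ σ) (fun x => fderiv ℝ (u n) x (V σ x)) ∂ν := by
        rw [intervalIntegral.integral_of_le hst]
      have hbound : ‖∫ σ, sInt (μ σ) (fun x => fderiv ℝ (u n) x (V σ x)) ∂ν‖ ≤ c :=
        norm_integral_le_of_norm_le hgint (Filter.Eventually.of_forall hF)
      rw [abs_sub_comm, heq, hIoc]
      simpa [Real.norm_eq_abs] using hbound
    -- sum the series
    have hterm : ∀ n : ℕ, |sInt (μ s) (u n) - sInt (μ t) (u n)| / 2 ^ n ≤ c * (1/2 : ℝ) ^ n := by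
      intro n
      calc |sInt (μ s) (u n) - sInt (μ t) (u n)| / 2 ^ n
          = |sInt (μ s) (u n) - sInt (μ t) (u n)| * (1/2 : ℝ) ^ n := by
            rw [div_eq_mul_inv, ← inv_pow]; norm_num
        _ ≤ c * (1/2 : ℝ) ^ n := mul_le_mul_of_nonneg_right (hΔ n) (by positivity)
    have hsum_big : Summable (fun n : ℕ => c * (1/2 : ℝ) ^ n) :=
      (summable_geometric_two).mul_left c
    have hsum_small : Summable (fun n : ℕ =>
        |sInt (μ s) (u n) - sInt (μ t) (u n)| / 2 ^ n) :=
      Summable.of_nonneg_of_le (fun n => by positivity) hterm hsum_big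
    have hwd : wDist u (μ s) (μ t) ≤ c * 2 := by
      unfold wDist
      calc (∑' n : ℕ, |sInt (μ s) (u n) - sInt (μ t) (u n)| / 2 ^ n)
          ≤ ∑' n : ℕ, c * (1/2 : ℝ) ^ n := Summable.tsum_le_tsum hterm hsum_small hsum_big
        _ = c * ∑' n : ℕ, (1/2 : ℝ) ^ n := tsum_mul_left
        _ = c * 2 := by rw [tsum_geometric_two]
    linarith
  intro s hs t ht hst
  rcases le_total s t with h | h
  · exact key s hs t ht h (by rwa [abs_of_nonneg (by linarith)] at hst)
  · rw [wDist_comm]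
    exact key t ht s hs h (by rw [abs_sub_comm] at hst; rwa [abs_of_nonneg (by linarith)] at hst)
end
end
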